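/- arXiv:0809.0665 — 4 statements merged into one kernel-verified Lean document; each statement's English description precedes it below -/
import Mathlib

section
/- Let d ≥ 1 and let a, b be real numbers with 0 < a < d, 0 < b < d and a + b = d. Then there exists a constant C > 0 such that for all y ∈ ℝ^d with 0 < |y| ≤ 1, ∫_{|x| ≤ 1} |x - y|^{-a} |x|^{-b} dx ≤ C (1 + log(1/|y|)). -/
/-!
Write `r = ‖y‖` and split the unit ball into the regions `‖x - y‖ ≤ r/2`,
`‖x - y‖ > r/2, ‖x‖ ≤ 2r` and `‖x‖ > 2r`. On the first, `‖x‖ ≥ r/2` bounds the factor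
`‖x‖^(-b)` by `(r/2)^(-b)`; on the second, `‖x - y‖^(-a) ≤ (r/2)^(-a)`; on the third,
`‖x - y‖ ≥ ‖x‖/2`, so the integrand is at most `2^a ‖x‖^(-d)`. In polar coordinates the first two
pieces contribute constants independent of `r` (the powers of `r` cancel because `a + b = d`),
while the third, integrated over `r ≤ ‖x‖ ≤ 1`, gives the logarithm `log (1/r)`.
-/

open Set Metric MeasureTheory Real
open scoped ENNReal

local notation "dim" => Module.finrank ℝ

lemma ofReal_rpow_norm_sub_mul_rpow_norm_le {E : Type*} [SeminormedAddCommGroup E] {a b R : ℝ}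
    (ha : 0 ≤ a) (hb : 0 ≤ b) {x y : E} (hy : 0 < ‖y‖) (hx : x ∈ closedBall (0 : E) R) :
    ENNReal.ofReal (‖x - y‖ ^ (-a) * ‖x‖ ^ (-b)) ≤
      (closedBall (0 : E) (‖y‖ / 2)).indicator
          (fun z ↦ ENNReal.ofReal ((‖y‖ / 2) ^ (-b)) * ENNReal.ofReal (‖z‖ ^ (-a))) (x - y)
        + (closedBall (0 : E) (2 * ‖y‖)).indicator
          (fun z ↦ ENNReal.ofReal ((‖y‖ / 2) ^ (-a)) * ENNReal.ofReal (‖z‖ ^ (-b))) x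
        + (closedBall (0 : E) R \ ball 0 ‖y‖).indicator
          (fun z ↦ ENNReal.ofReal (2 ^ a) * ENNReal.ofReal (‖z‖ ^ (-(a + b)))) x := by
  have hy2 : 0 < ‖y‖ / 2 := by positivity
  have hxy : ‖y‖ ≤ ‖x - y‖ + ‖x‖ := by
    simpa [norm_sub_rev] using norm_sub_le_norm_sub_add_norm_sub y x 0
  have hyx : ‖x‖ ≤ ‖x - y‖ + ‖y‖ := norm_le_norm_sub_add x y
  simp only [← ENNReal.ofReal_mul (rpow_nonneg hy2.le _),
    ← ENNReal.ofReal_mul (rpow_nonneg zero_le_two _)]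
  by_cases hnear : ‖x - y‖ ≤ ‖y‖ / 2
  · have hb' : ‖x‖ ^ (-b) ≤ (‖y‖ / 2) ^ (-b) :=
      rpow_le_rpow_of_nonpos hy2 (by linarith) (by linarith)
    refine le_add_right (le_add_right ?_)
    rw [indicator_of_mem (mem_closedBall_zero_iff.2 hnear), mul_comm ((‖y‖ / 2) ^ (-b))]
    exact ENNReal.ofReal_le_ofReal (mul_le_mul_of_nonneg_left hb' (by positivity))
  by_cases hmid : ‖x‖ ≤ 2 * ‖y‖
  · have ha' : ‖x - y‖ ^ (-a) ≤ (‖y‖ / 2) ^ (-a) :=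
      rpow_le_rpow_of_nonpos hy2 (by linarith) (by linarith)
    refine le_add_right (le_add_left ?_)
    rw [indicator_of_mem (mem_closedBall_zero_iff.2 hmid)]
    exact ENNReal.ofReal_le_ofReal (mul_le_mul_of_nonneg_right ha' (by positivity))
  have hx0 : 0 < ‖x‖ := by linarith
  have ha' : ‖x - y‖ ^ (-a) ≤ 2 ^ a * ‖x‖ ^ (-a) :=
    calc ‖x - y‖ ^ (-a) ≤ (‖x‖ / 2) ^ (-a) :=
          rpow_le_rpow_of_nonpos (by positivity) (by linarith) (by linarith)
      _ = 2 ^ a * ‖x‖ ^ (-a) := by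
          rw [div_rpow hx0.le zero_le_two, rpow_neg zero_le_two, div_inv_eq_mul, mul_comm]
  refine le_add_left ?_
  have hfar : x ∈ closedBall (0 : E) R \ ball 0 ‖y‖ := ⟨hx, by simpa using (by linarith)⟩
  rw [indicator_of_mem hfar, neg_add, rpow_add hx0, ← mul_assoc]
  exact ENNReal.ofReal_le_ofReal (mul_le_mul_of_nonneg_right ha' (by positivity))

section HaarMeasure

variable {E : Type*} [NormedAddCommGroup E] [NormedSpace ℝ E] [FiniteDimensional ℝ E]
  [MeasurableSpace E] [BorelSpace E] [Nontrivial E] (μ : Measure E) [μ.IsAddHaarMeasure]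

lemma lintegral_fun_norm_addHaar (f : ℝ → ℝ≥0∞) (hf : Measurable f) :
    ∫⁻ x, f ‖x‖ ∂μ
      = dim E * μ (ball 0 1) * ∫⁻ t in Ioi (0 : ℝ), ENNReal.ofReal (t ^ (dim E - 1)) * f t := by
  calc
    ∫⁻ x, f ‖x‖ ∂μ = ∫⁻ x : ({(0)}ᶜ : Set E), f ‖x.1‖ ∂(μ.comap (↑)) := by
      rw [lintegral_subtype_comap (measurableSet_singleton _).compl fun x ↦ f ‖x‖,
        restrict_compl_singleton]
    _ = ∫⁻ x : sphere (0 : E) 1 × Ioi (0 : ℝ), f x.2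
          ∂μ.toSphere.prod (.volumeIoiPow (dim E - 1)) := by
      rw [← μ.measurePreserving_homeomorphUnitSphereProd.lintegral_comp_emb
        (Homeomorph.measurableEmbedding _) (fun x ↦ f x.2)]
      simp
    _ = μ.toSphere univ * ∫⁻ t : Ioi (0 : ℝ), f t ∂(.volumeIoiPow (dim E - 1)) := by
      rw [← lintegral_map (f := fun t : Ioi (0 : ℝ) ↦ f t) (by fun_prop) measurable_snd,
        Measure.map_snd_prod, lintegral_smul_measure, smul_eq_mul]
    _ = _ := by
      rw [μ.toSphere_apply_univ, Measure.volumeIoiPow,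
        lintegral_withDensity_eq_lintegral_mul _ (by fun_prop) (by fun_prop)]
      exact congrArg _ (lintegral_subtype_comap measurableSet_Ioi
        fun t ↦ ENNReal.ofReal (t ^ (dim E - 1)) * f t)

lemma setLIntegral_rpow_norm {s : Set ℝ} (hs : MeasurableSet s) (p : ℝ) :
    ∫⁻ x in {x : E | ‖x‖ ∈ s}, ENNReal.ofReal (‖x‖ ^ p) ∂μ
      = dim E * μ (ball 0 1) * ∫⁻ t in s ∩ Ioi 0, ENNReal.ofReal (t ^ ((dim E : ℝ) - 1 + p)) := by
  have hg : Measurable (s.indicator fun t : ℝ ↦ ENNReal.ofReal (t ^ p)) :=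
    (by fun_prop : Measurable fun t : ℝ ↦ ENNReal.ofReal (t ^ p)).indicator hs
  rw [← lintegral_indicator (s := {x : E | ‖x‖ ∈ s}) (measurable_norm hs)]
  have hcomp (x : E) : {x : E | ‖x‖ ∈ s}.indicator (fun x ↦ ENNReal.ofReal (‖x‖ ^ p)) x
      = s.indicator (fun t ↦ ENNReal.ofReal (t ^ p)) ‖x‖ :=
    indicator_comp_right (fun x : E ↦ ‖x‖) (g := fun t ↦ ENNReal.ofReal (t ^ p))
  rw [lintegral_congr hcomp, lintegral_fun_norm_addHaar μ _ hg]
  congr 1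
  rw [lintegral_congr fun t ↦ (indicator_mul_right s (fun t ↦ ENNReal.ofReal (t ^ (dim E - 1)))
    fun t ↦ ENNReal.ofReal (t ^ p)).symm, lintegral_indicator hs, Measure.restrict_restrict hs]
  refine setLIntegral_congr_fun (hs.inter measurableSet_Ioi) fun t ht ↦ ?_
  have ht : 0 < t := ht.2
  rw [← ENNReal.ofReal_mul (by positivity), ← rpow_natCast, Nat.cast_sub Module.finrank_pos,
    ← rpow_add ht, Nat.cast_one]

lemma lintegral_rpow_norm_closedBall {p r : ℝ} (hp : -(dim E : ℝ) < p) (hr : 0 ≤ r) :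
    ∫⁻ x in closedBall (0 : E) r, ENNReal.ofReal (‖x‖ ^ p) ∂μ
      = dim E * μ (ball 0 1) * ENNReal.ofReal (r ^ ((dim E : ℝ) + p) / ((dim E : ℝ) + p)) := by
  have hball : closedBall (0 : E) r = {x | ‖x‖ ∈ Iic r} := by ext; simp
  have hq : -1 < (dim E : ℝ) - 1 + p := by linarith
  rw [hball, setLIntegral_rpow_norm μ measurableSet_Iic, Iic_inter_Ioi,
    ← ofReal_integral_eq_lintegral_ofReal]
  · rw [← intervalIntegral.integral_of_le hr, integral_rpow (Or.inl hq),
      zero_rpow (by linarith), sub_zero, show (dim E : ℝ) - 1 + p + 1 = dim E + p by ring]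
  · exact (intervalIntegrable_iff_integrableOn_Ioc_of_le hr).mp
      (intervalIntegral.intervalIntegrable_rpow' hq)
  · filter_upwards [ae_restrict_mem measurableSet_Ioc] with t ht
    exact rpow_nonneg ht.1.le _

lemma lintegral_rpow_neg_finrank_norm_annulus {r R : ℝ} (hr : 0 < r) (hrR : r ≤ R) :
    ∫⁻ x in closedBall (0 : E) R \ ball 0 r, ENNReal.ofReal (‖x‖ ^ (-(dim E : ℝ))) ∂μ
      = dim E * μ (ball 0 1) * ENNReal.ofReal (log (R / r)) := by
  have hannulus : closedBall (0 : E) R \ ball 0 r = {x | ‖x‖ ∈ Icc r R} := by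
    ext; simp [and_comm]
  have hpos : Icc r R ∩ Ioi 0 = Icc r R := inter_eq_left.2 fun t ht ↦ hr.trans_le ht.1
  rw [hannulus, setLIntegral_rpow_norm μ measurableSet_Icc, hpos]
  congr 1
  rw [setLIntegral_congr_fun measurableSet_Icc
      (g := fun t ↦ ENNReal.ofReal t⁻¹) fun t _ ↦ by
        rw [show (dim E : ℝ) - 1 + -(dim E : ℝ) = -1 by ring, rpow_neg_one],
    ← ofReal_integral_eq_lintegral_ofReal]
  · rw [integral_Icc_eq_integral_Ioc, ← intervalIntegral.integral_of_le hrR, integral_inv]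
    rw [uIcc_of_le hrR]
    exact fun h ↦ hr.not_ge h.1
  · exact (continuousOn_inv₀.mono fun t ht ↦ (hr.trans_le ht.1).ne').integrableOn_compact
      isCompact_Icc
  · filter_upwards [ae_restrict_mem measurableSet_Icc] with t ht
    exact inv_nonneg.2 (hr.le.trans ht.1)

lemma lintegral_indicator_closedBall_const_mul_rpow_norm (κ : ℝ) {p r : ℝ}
    (hp : -(dim E : ℝ) < p) (hr : 0 ≤ r) :
    ∫⁻ x, (closedBall (0 : E) r).indicator
        (fun z ↦ ENNReal.ofReal κ * ENNReal.ofReal (‖z‖ ^ p)) x ∂μ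
      = dim E * μ (ball 0 1)
          * ENNReal.ofReal (κ * (r ^ ((dim E : ℝ) + p) / ((dim E : ℝ) + p))) := by
  rw [lintegral_indicator measurableSet_closedBall, lintegral_const_mul _ (by fun_prop),
    lintegral_rpow_norm_closedBall μ hp hr, mul_left_comm,
    ← ENNReal.ofReal_mul' (div_nonneg (rpow_nonneg hr _) (by linarith))]

lemma lintegral_rpow_norm_sub_mul_rpow_norm_le {a b : ℝ} (ha : 0 < a) (hb : 0 < b)
    (hab : a + b = dim E) {y : E} (hy : y ≠ 0) (hy1 : ‖y‖ ≤ 1) :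
    ∫⁻ x in closedBall (0 : E) 1, ENNReal.ofReal (‖x - y‖ ^ (-a) * ‖x‖ ^ (-b)) ∂μ
      ≤ dim E * μ (ball 0 1) * ENNReal.ofReal (1 / b + 4 ^ a / a + 2 ^ a * log (1 / ‖y‖)) := by
  set r := ‖y‖
  have hr : 0 < r := norm_pos_iff.2 hy
  have hlog : 0 ≤ log (1 / r) := log_nonneg (one_le_one_div hr hy1)
  set c : ℝ≥0∞ := dim E * μ (ball 0 1)
  set G₁ : E → ℝ≥0∞ := (closedBall (0 : E) (r / 2)).indicator
    fun z ↦ ENNReal.ofReal ((r / 2) ^ (-b)) * ENNReal.ofReal (‖z‖ ^ (-a))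
  set G₂ : E → ℝ≥0∞ := (closedBall (0 : E) (2 * r)).indicator
    fun z ↦ ENNReal.ofReal ((r / 2) ^ (-a)) * ENNReal.ofReal (‖z‖ ^ (-b))
  set G₃ : E → ℝ≥0∞ := (closedBall (0 : E) 1 \ ball 0 r).indicator
    fun z ↦ ENNReal.ofReal (2 ^ a) * ENNReal.ofReal (‖z‖ ^ (-(a + b)))
  have hG₁ : Measurable G₁ := (by fun_prop : Measurable _).indicator measurableSet_closedBall
  have hG₂ : Measurable G₂ := (by fun_prop : Measurable _).indicator measurableSet_closedBall
  have hG₃ : Measurable G₃ :=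
    (by fun_prop : Measurable _).indicator (measurableSet_closedBall.diff measurableSet_ball)
  have hI₁ : ∫⁻ x, G₁ (x - y) ∂μ = c * ENNReal.ofReal (1 / b) := by
    rw [lintegral_sub_right_eq_self G₁ y, lintegral_indicator_closedBall_const_mul_rpow_norm μ _
      (by linarith) (by positivity), show (dim E : ℝ) + -a = b by linarith,
      rpow_neg (by positivity)]
    congr 2
    field_simp
  have hI₂ : ∫⁻ x, G₂ x ∂μ = c * ENNReal.ofReal (4 ^ a / a) := by
    rw [lintegral_indicator_closedBall_const_mul_rpow_norm μ _ (by linarith) (by positivity),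
      show (dim E : ℝ) + -b = a by linarith, rpow_neg (by positivity), ← mul_div_assoc,
      inv_mul_eq_div, ← div_rpow (by positivity) (by positivity),
      show 2 * r / (r / 2) = 4 by field_simp; ring]
  have hI₃ : ∫⁻ x, G₃ x ∂μ = c * (ENNReal.ofReal (2 ^ a) * ENNReal.ofReal (log (1 / r))) := by
    rw [lintegral_indicator (measurableSet_closedBall.diff measurableSet_ball),
      lintegral_const_mul _ (by fun_prop), hab,
      lintegral_rpow_neg_finrank_norm_annulus μ hr hy1, mul_left_comm]
  calc ∫⁻ x in closedBall (0 : E) 1, ENNReal.ofReal (‖x - y‖ ^ (-a) * ‖x‖ ^ (-b)) ∂μ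
      ≤ ∫⁻ x in closedBall (0 : E) 1, G₁ (x - y) + G₂ x + G₃ x ∂μ :=
        setLIntegral_mono (by fun_prop) fun x hx ↦
          ofReal_rpow_norm_sub_mul_rpow_norm_le ha.le hb.le hr hx
    _ ≤ ∫⁻ x, G₁ (x - y) + G₂ x + G₃ x ∂μ := setLIntegral_le_lintegral _ _
    _ = c * ENNReal.ofReal (1 / b + 4 ^ a / a + 2 ^ a * log (1 / r)) := by
        rw [lintegral_add_right _ hG₃, lintegral_add_right _ hG₂, hI₁, hI₂, hI₃,
          ← ENNReal.ofReal_mul (by positivity), ENNReal.ofReal_add (by positivity) (by positivity),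
          ENNReal.ofReal_add (by positivity) (by positivity)]
        ring

end HaarMeasure

theorem stmt1_general (d : ℕ) (a b : ℝ) (ha : 0 < a) (hb : 0 < b) (hab : a + b = (d : ℝ)) :
    ∃ C > 0, ∀ y : EuclideanSpace ℝ (Fin d), y ≠ 0 → ‖y‖ ≤ 1 →
      (∫ x in Metric.closedBall (0 : EuclideanSpace ℝ (Fin d)) 1,
          ‖x - y‖ ^ (-a) * ‖x‖ ^ (-b))
        ≤ C * (1 + Real.log (1 / ‖y‖)) := by
  have hd : 0 < d := by exact_mod_cast (show (0 : ℝ) < d by linarith)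
  have : Nonempty (Fin d) := ⟨⟨0, hd⟩⟩
  have hdim : dim (EuclideanSpace ℝ (Fin d)) = d := finrank_euclideanSpace_fin
  set c := d * volume.real (ball (0 : EuclideanSpace ℝ (Fin d)) 1)
  have hc : 0 < c := mul_pos (by exact_mod_cast hd)
    (ENNReal.toReal_pos (measure_ball_pos volume 0 one_pos).ne' measure_ball_lt_top.ne)
  refine ⟨c * (1 / b + 4 ^ a / a + 2 ^ a), by positivity, fun y hy hy1 ↦ ?_⟩
  have hlog : 0 ≤ log (1 / ‖y‖) := log_nonneg (one_le_one_div (norm_pos_iff.2 hy) hy1)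
  have hbound := lintegral_rpow_norm_sub_mul_rpow_norm_le volume ha hb (hab.trans (by rw [hdim]))
    hy hy1
  calc ∫ x in closedBall 0 1, ‖x - y‖ ^ (-a) * ‖x‖ ^ (-b)
      ≤ (∫⁻ x in closedBall 0 1, ENNReal.ofReal (‖x - y‖ ^ (-a) * ‖x‖ ^ (-b))).toReal := by
        refine (le_norm_self _).trans ((norm_integral_le_lintegral_norm _).trans_eq ?_)
        refine congrArg _ (lintegral_congr fun x ↦ ?_)
        rw [Real.norm_eq_abs, abs_of_nonneg (by positivity)]
    _ ≤ c * (1 / b + 4 ^ a / a + 2 ^ a * log (1 / ‖y‖)) := by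
        refine ENNReal.toReal_le_of_le_ofReal (by positivity) (hbound.trans_eq ?_)
        rw [hdim, ENNReal.ofReal_mul (by positivity), ENNReal.ofReal_mul (by positivity),
          ENNReal.ofReal_natCast, ofReal_measureReal]
    _ ≤ c * (1 / b + 4 ^ a / a + 2 ^ a) * (1 + log (1 / ‖y‖)) := by
        rw [mul_assoc c]
        refine mul_le_mul_of_nonneg_left ?_ hc.le
        nlinarith [mul_nonneg (by positivity : (0 : ℝ) ≤ 1 / b + 4 ^ a / a) hlog,
          (by positivity : (0 : ℝ) ≤ 2 ^ a)]

theorem stmt1 (d : ℕ) (hd : 1 ≤ d) (a b : ℝ) (ha : 0 < a) (had : a < d)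
    (hb : 0 < b) (hbd : b < d) (hab : a + b = (d : ℝ)) :
    ∃ C > 0, ∀ y : EuclideanSpace ℝ (Fin d), y ≠ 0 → ‖y‖ ≤ 1 →
      (∫ x in Metric.closedBall (0 : EuclideanSpace ℝ (Fin d)) 1,
          ‖x - y‖ ^ (-a) * ‖x‖ ^ (-b))
        ≤ C * (1 + Real.log (1 / ‖y‖)) :=
  stmt1_general d a b ha hb hab
end

section
/- Let d ≥ 1 and let a, b be real numbers with 0 < a, 0 < b and a + b < d. Then there exists a constant C > 0 such that for all y ∈ ℝ^d, ∫_{|x| ≤ 1} |x - y|^{-a} |x|^{-b} dx ≤ C. -/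
/-!
Weighted AM–GM gives `s^(-a) t^(-b) ≤ s^(-c) + t^(-c)` with `c = a + b`, so the integrand is
dominated by `‖x - y‖^(-c) + ‖x‖^(-c)`. Since `c < d`, the kernel `‖z‖^(-c)` is integrable on
the unit ball and at most `1` outside it; hence on a set of finite measure the translate
`‖x - y‖^(-c)` has integral at most the measure of the set plus a constant independent of `y`,
by translation invariance of Lebesgue measure.
-/

open MeasureTheory Metric Set

lemma Real.rpow_neg_mul_rpow_neg_le {a b s t : ℝ} (ha : 0 < a) (hb : 0 < b) (hs : 0 ≤ s)
    (ht : 0 ≤ t) : s ^ (-a) * t ^ (-b) ≤ s ^ (-(a + b)) + t ^ (-(a + b)) := by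
  have hc : 0 < a + b := add_pos ha hb
  have hwa : a / (a + b) ≤ 1 := (div_le_one hc).2 (by linarith)
  have hwb : b / (a + b) ≤ 1 := (div_le_one hc).2 (by linarith)
  have hsplit : ∀ {u w : ℝ}, 0 ≤ u → u ^ (-w) = (u ^ (-(a + b))) ^ (w / (a + b)) := by
    intro u w hu
    rw [← Real.rpow_mul hu]
    congr 1
    field_simp
  have hS := Real.rpow_nonneg hs (-(a + b))
  have hT := Real.rpow_nonneg ht (-(a + b))
  calc s ^ (-a) * t ^ (-b)
      = (s ^ (-(a + b))) ^ (a / (a + b)) * (t ^ (-(a + b))) ^ (b / (a + b)) := by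
        rw [hsplit hs, hsplit ht]
    _ ≤ a / (a + b) * s ^ (-(a + b)) + b / (a + b) * t ^ (-(a + b)) :=
        Real.geom_mean_le_arith_mean2_weighted (by positivity) (by positivity) hS hT
          (by field_simp)
    _ ≤ s ^ (-(a + b)) + t ^ (-(a + b)) :=
        add_le_add (mul_le_of_le_one_left hS hwa) (mul_le_of_le_one_left hT hwb)

lemma norm_rpow_neg_le_one_add_indicator {E : Type*} [SeminormedAddCommGroup E] {c : ℝ}
    (hc : 0 ≤ c) (z : E) :
    ‖z‖ ^ (-c) ≤ 1 + (closedBall (0 : E) 1).indicator (fun x ↦ ‖x‖ ^ (-c)) z := by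
  by_cases hz : z ∈ closedBall (0 : E) 1
  · rw [indicator_of_mem hz]
    exact le_add_of_nonneg_left zero_le_one
  · rw [indicator_of_notMem hz, add_zero]
    rw [mem_closedBall_zero_iff, not_le] at hz
    exact Real.rpow_le_one_of_one_le_of_nonpos hz.le (neg_nonpos.2 hc)

section HaarMeasure

variable {E : Type*} [NormedAddCommGroup E] [NormedSpace ℝ E] [FiniteDimensional ℝ E]
  [MeasurableSpace E] [BorelSpace E] {μ : Measure E} [μ.IsAddHaarMeasure]

lemma integrable_indicator_closedBall_norm_rpow_neg {c : ℝ} (hc : 0 < c)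
    (hcE : c < Module.finrank ℝ E) :
    Integrable ((closedBall (0 : E) 1).indicator (fun x ↦ ‖x‖ ^ (-c))) μ := by
  have hE : 1 ≤ Module.finrank ℝ E := by
    exact_mod_cast (show (0 : ℝ) < Module.finrank ℝ E from hc.trans hcE)
  have hloc : LocallyIntegrable (fun x : E ↦ ‖x‖ ^ (-c)) μ :=
    locallyIntegrable_of_norm_le_rpow (C := 1) hE hcE
      (Filter.Eventually.of_forall fun x ↦ by
        rw [one_mul, Real.norm_of_nonneg (Real.rpow_nonneg (norm_nonneg x) _)])
      (measurable_norm.pow_const _).aestronglyMeasurable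
  rw [integrable_indicator_iff measurableSet_closedBall]
  exact hloc.integrableOn_isCompact (isCompact_closedBall 0 1)

theorem setIntegral_norm_sub_rpow_neg_mul_norm_rpow_neg_le {a b : ℝ} (ha : 0 < a) (hb : 0 < b)
    (hab : a + b < Module.finrank ℝ E) {s : Set E} (hs : μ s ≠ ⊤) (y : E) :
    ∫ x in s, ‖x - y‖ ^ (-a) * ‖x‖ ^ (-b) ∂μ ≤
      2 * (μ.real s +
        ∫ x, (closedBall (0 : E) 1).indicator (fun x ↦ ‖x‖ ^ (-(a + b))) x ∂μ) := by
  set G := (closedBall (0 : E) 1).indicator (fun x ↦ ‖x‖ ^ (-(a + b)))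
  have hG : Integrable G μ := integrable_indicator_closedBall_norm_rpow_neg (add_pos ha hb) hab
  have hG_nonneg : 0 ≤ G :=
    indicator_nonneg fun x _ ↦ Real.rpow_nonneg (norm_nonneg x) _
  have hone : IntegrableOn (fun _ ↦ (1 : ℝ)) s μ := integrableOn_const hs
  have hGy : IntegrableOn (fun x ↦ G (x - y)) s μ := (hG.comp_sub_right y).integrableOn
  have hdom : ∀ x, ‖x - y‖ ^ (-a) * ‖x‖ ^ (-b) ≤ (1 + G (x - y)) + (1 + G x) := fun _ ↦
    (Real.rpow_neg_mul_rpow_neg_le ha hb (norm_nonneg _) (norm_nonneg _)).trans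
      (add_le_add (norm_rpow_neg_le_one_add_indicator (add_pos ha hb).le _)
        (norm_rpow_neg_le_one_add_indicator (add_pos ha hb).le _))
  calc ∫ x in s, ‖x - y‖ ^ (-a) * ‖x‖ ^ (-b) ∂μ
      ≤ ∫ x in s, (1 + G (x - y)) + (1 + G x) ∂μ :=
        integral_mono_of_nonneg
          (Filter.Eventually.of_forall fun x ↦ by positivity)
          ((hone.add hGy).add (hone.add hG.integrableOn))
          (Filter.Eventually.of_forall hdom)
    _ = (μ.real s + ∫ x in s, G (x - y) ∂μ) + (μ.real s + ∫ x in s, G x ∂μ) := by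
        rw [integral_add (f := fun x ↦ 1 + G (x - y)) (g := fun x ↦ 1 + G x) (hone.add hGy)
          (hone.add hG.integrableOn), integral_add hone hGy,
          integral_add hone hG.integrableOn, setIntegral_const, smul_eq_mul, mul_one]
    _ ≤ (μ.real s + ∫ x, G (x - y) ∂μ) + (μ.real s + ∫ x, G x ∂μ) :=
        add_le_add
          (add_le_add le_rfl (setIntegral_le_integral (hG.comp_sub_right y)
            (.of_forall fun x ↦ hG_nonneg (x - y))))
          (add_le_add le_rfl (setIntegral_le_integral hG (.of_forall hG_nonneg)))
    _ = 2 * (μ.real s + ∫ x, G x ∂μ) := by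
        rw [integral_sub_right_eq_self G y]
        ring

end HaarMeasure

theorem stmt2_general (d : ℕ) (a b : ℝ) (ha : 0 < a) (hb : 0 < b)
    (hab : a + b < (d : ℝ)) :
    ∃ C > 0, ∀ y : EuclideanSpace ℝ (Fin d),
      (∫ x in Metric.closedBall (0 : EuclideanSpace ℝ (Fin d)) 1,
          ‖x - y‖ ^ (-a) * ‖x‖ ^ (-b)) ≤ C := by
  rw [← finrank_euclideanSpace_fin (𝕜 := ℝ) (n := d)] at hab
  exact ⟨max _ 1, by positivity, fun y ↦ (setIntegral_norm_sub_rpow_neg_mul_norm_rpow_neg_le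
    ha hb hab measure_closedBall_lt_top.ne y).trans (le_max_left _ _)⟩

theorem stmt2 (d : ℕ) (hd : 1 ≤ d) (a b : ℝ) (ha : 0 < a) (hb : 0 < b)
    (hab : a + b < (d : ℝ)) :
    ∃ C > 0, ∀ y : EuclideanSpace ℝ (Fin d),
      (∫ x in Metric.closedBall (0 : EuclideanSpace ℝ (Fin d)) 1,
          ‖x - y‖ ^ (-a) * ‖x‖ ^ (-b)) ≤ C :=
  stmt2_general d a b ha hb hab
end

section
/- Let d ≥ 1, a > d and 0 < b < d. Then there exists a constant C > 0 such that for all y ∈ ℝ^d with y ≠ 0, ∫_{ℝ^d} (1 + |x - y|^a)^{-1} |x|^{-b} dx ≤ C |y|^{-b}. -/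
/-!
Split `ℝ^d` at the ball `B` of radius `s = |y|/2` about the origin. On `B` one has
`|x - y| ≥ s`, so the kernel is at most `min 1 (s^(-a))`, while `∫_B |x|^(-b) = c s^(d-b)`
because `b < d`; since `d ≤ a`, `min 1 (s^(-a)) * s^d ≤ 1`. Off `B` one has
`|x|^(-b) ≤ s^(-b)`, and the kernel is integrable because `a > d`. Both pieces are therefore
`O(s^(-b)) = O(|y|^(-b))`.
-/

open MeasureTheory Metric Set Module

theorem Real.one_add_rpow_le_two_rpow_mul {t a : ℝ} (ht : 0 ≤ t) (ha : 0 ≤ a) :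
    (1 + t) ^ a ≤ 2 ^ a * (1 + t ^ a) := by
  have hmax : (max 1 t) ^ a ≤ 1 + t ^ a := by
    rcases le_total t 1 with h | h
    · rw [max_eq_left h, Real.one_rpow]
      linarith [Real.rpow_nonneg ht a]
    · rw [max_eq_right h]
      linarith
  calc (1 + t) ^ a ≤ (2 * max 1 t) ^ a := by
        gcongr
        linarith [le_max_left 1 t, le_max_right 1 t]
    _ = 2 ^ a * (max 1 t) ^ a := Real.mul_rpow zero_le_two (by positivity)
    _ ≤ 2 ^ a * (1 + t ^ a) := by gcongr

theorem Real.min_one_rpow_neg_mul_rpow_le_one {s n a : ℝ} (hs : 0 < s) (hn : 0 ≤ n)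
    (hna : n ≤ a) : min 1 (s ^ (-a)) * s ^ n ≤ 1 := by
  rcases le_total s 1 with hs1 | hs1
  · exact mul_le_one₀ (min_le_left _ _) (by positivity) (Real.rpow_le_one hs.le hs1 hn)
  · calc min 1 (s ^ (-a)) * s ^ n ≤ s ^ (-a) * s ^ n := by gcongr; exact min_le_right _ _
      _ = s ^ (n - a) := by rw [← Real.rpow_add hs]; ring_nf
      _ ≤ 1 := Real.rpow_le_one_of_one_le_of_nonpos hs1 (by linarith)

theorem inv_one_add_norm_sub_rpow_mul_norm_rpow_le {E : Type*} [NormedAddCommGroup E]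
    {a b : ℝ} (ha : 0 ≤ a) (hb : 0 ≤ b) {y : E} (hy : y ≠ 0) (x : E) :
    (1 + ‖x - y‖ ^ a)⁻¹ * ‖x‖ ^ (-b) ≤
      (ball 0 (‖y‖ / 2)).indicator (fun x ↦ min 1 ((‖y‖ / 2) ^ (-a)) * ‖x‖ ^ (-b)) x +
        (‖y‖ / 2) ^ (-b) * (1 + ‖x - y‖ ^ a)⁻¹ := by
  have hs : 0 < ‖y‖ / 2 := by positivity
  by_cases hx : x ∈ ball 0 (‖y‖ / 2)
  · rw [indicator_of_mem hx]
    have hxy : ‖y‖ / 2 ≤ ‖x - y‖ := by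
      rw [mem_ball_zero_iff] at hx
      linarith [norm_sub_norm_le y x, norm_sub_rev x y]
    have hkernel : (1 + ‖x - y‖ ^ a)⁻¹ ≤ min 1 ((‖y‖ / 2) ^ (-a)) := by
      refine le_min (inv_le_one_of_one_le₀ (by simp [Real.rpow_nonneg])) ?_
      rw [Real.rpow_neg hs.le]
      gcongr
      linarith [Real.rpow_le_rpow hs.le hxy ha]
    exact le_add_of_le_of_nonneg (by gcongr) (by positivity)
  · rw [indicator_of_notMem hx, zero_add, mul_comm]
    rw [mem_ball_zero_iff, not_lt] at hx
    exact mul_le_mul_of_nonneg_right (Real.rpow_le_rpow_of_nonpos hs hx (neg_nonpos.2 hb))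
      (by positivity)

section HaarMeasure

variable {E : Type*} [NormedAddCommGroup E] [NormedSpace ℝ E] [FiniteDimensional ℝ E]
  [MeasurableSpace E] [BorelSpace E] {μ : Measure E} [μ.IsAddHaarMeasure]

theorem integrable_inv_one_add_norm_rpow {a : ℝ} (ha : (finrank ℝ E : ℝ) < a) :
    Integrable (fun x : E ↦ (1 + ‖x‖ ^ a)⁻¹) μ := by
  have ha₀ : 0 ≤ a := (Nat.cast_nonneg _).trans ha.le
  refine ((integrable_one_add_norm ha).const_mul (2 ^ a)).mono' (by fun_prop) <|
    .of_forall fun x ↦ ?_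
  rw [Real.norm_of_nonneg (by positivity), Real.rpow_neg (by positivity), ← div_eq_mul_inv,
    le_div_iff₀ (by positivity), mul_comm, ← div_eq_mul_inv,
    div_le_iff₀ (by positivity)]
  exact Real.one_add_rpow_le_two_rpow_mul (norm_nonneg x) ha₀

theorem setIntegral_ball_norm_rpow [Nontrivial E] {b r : ℝ} (hb : b < finrank ℝ E)
    (hr : 0 ≤ r) :
    ∫ x in ball (0 : E) r, ‖x‖ ^ (-b) ∂μ =
      finrank ℝ E * μ.real (ball 0 1) / (finrank ℝ E - b) *
        r ^ ((finrank ℝ E : ℝ) - b) := by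
  have hball : ∫ x in ball (0 : E) r, ‖x‖ ^ (-b) ∂μ =
      ∫ x, (Iio r).indicator (fun t : ℝ ↦ t ^ (-b)) ‖x‖ ∂μ := by
    rw [← integral_indicator measurableSet_ball]
    congr 1 with x
    simp [indicator]
  have hradial :
      ∫ t in Ioi (0 : ℝ), t ^ (finrank ℝ E - 1) • (Iio r).indicator (fun t ↦ t ^ (-b)) t =
        ∫ t in (0)..r, t ^ ((finrank ℝ E : ℝ) - 1 - b) := by
    rw [intervalIntegral.integral_of_le hr, integral_Ioc_eq_integral_Ioo,
      ← integral_indicator measurableSet_Ioo,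
      ← integral_indicator measurableSet_Ioi]
    congr 1 with t
    by_cases h0 : 0 < t <;> by_cases htr : t < r <;> simp [h0, htr]
    rw [← Real.rpow_natCast, ← Real.rpow_add h0, Nat.cast_sub finrank_pos, Nat.cast_one,
      sub_eq_add_neg _ b]
  rw [hball, integral_fun_norm_addHaar, hradial, integral_rpow (by left; linarith)]
  have hexp : (finrank ℝ E : ℝ) - 1 - b + 1 = finrank ℝ E - b := by ring
  rw [hexp, Real.zero_rpow (by linarith), sub_zero, nsmul_eq_mul, smul_eq_mul]
  field_simp

theorem exists_integral_inv_one_add_norm_sub_rpow_mul_norm_rpow_le {a b : ℝ} (hb : 0 < b)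
    (hbn : b < finrank ℝ E) (hna : finrank ℝ E < a) :
    ∃ C > 0, ∀ y : E, y ≠ 0 →
      ∫ x, (1 + ‖x - y‖ ^ a)⁻¹ * ‖x‖ ^ (-b) ∂μ ≤ C * ‖y‖ ^ (-b) := by
  have hn : 0 < finrank ℝ E := by exact_mod_cast hb.trans hbn
  have : Nontrivial E := nontrivial_of_finrank_pos hn
  have ha : 0 ≤ a := (Nat.cast_nonneg _).trans hna.le
  set cball := finrank ℝ E * μ.real (ball 0 1) / (finrank ℝ E - b)
  set K := ∫ x, (1 + ‖x‖ ^ a)⁻¹ ∂μ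
  have hcball : 0 < cball := by
    have : 0 < μ.real (ball (0 : E) 1) :=
      ENNReal.toReal_pos (measure_ball_pos μ 0 one_pos).ne' measure_ball_lt_top.ne
    have : (0 : ℝ) < finrank ℝ E - b := by linarith
    positivity
  have hK : 0 ≤ K := integral_nonneg fun x ↦ by positivity
  refine ⟨(cball + K) * 2 ^ b, by positivity, fun y hy ↦ ?_⟩
  set s := ‖y‖ / 2
  have hs : 0 < s := by positivity
  have hball : IntegrableOn (fun x : E ↦ ‖x‖ ^ (-b)) (ball 0 s) μ :=
    integrableOn_ball_of_norm_le_rpow (C := 1) hn hbn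
      (.of_forall fun x ↦ by simp [Real.norm_of_nonneg (Real.rpow_nonneg (norm_nonneg x) _)])
      (by fun_prop : Measurable fun x : E ↦ ‖x‖ ^ (-b)).aestronglyMeasurable
  have hsingular : Integrable
      ((ball 0 s).indicator fun x ↦ min 1 (s ^ (-a)) * ‖x‖ ^ (-b)) μ :=
    (integrable_indicator_iff measurableSet_ball).2 (hball.const_mul _)
  have hkernel : Integrable (fun x : E ↦ (1 + ‖x - y‖ ^ a)⁻¹) μ :=
    (integrable_inv_one_add_norm_rpow hna).comp_sub_right y
  calc ∫ x, (1 + ‖x - y‖ ^ a)⁻¹ * ‖x‖ ^ (-b) ∂μ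
      ≤ ∫ x, ((ball 0 s).indicator (fun x ↦ min 1 (s ^ (-a)) * ‖x‖ ^ (-b)) x +
          s ^ (-b) * (1 + ‖x - y‖ ^ a)⁻¹) ∂μ :=
        integral_mono_of_nonneg (.of_forall fun x ↦ by positivity)
          (hsingular.add (hkernel.const_mul _))
          (.of_forall (inv_one_add_norm_sub_rpow_mul_norm_rpow_le ha hb.le hy))
    _ = min 1 (s ^ (-a)) * (cball * s ^ ((finrank ℝ E : ℝ) - b)) + s ^ (-b) * K := by
        rw [integral_add hsingular (hkernel.const_mul _), integral_indicator measurableSet_ball,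
          integral_const_mul,
          setIntegral_ball_norm_rpow hbn hs.le, integral_const_mul,
          integral_sub_right_eq_self (fun x ↦ (1 + ‖x‖ ^ a)⁻¹)]
    _ ≤ cball * s ^ (-b) + s ^ (-b) * K := by
        gcongr ?_ + _
        rw [sub_eq_add_neg, Real.rpow_add hs]
        calc _ = cball * (min 1 (s ^ (-a)) * s ^ (finrank ℝ E : ℝ)) * s ^ (-b) := by ring
          _ ≤ cball * 1 * s ^ (-b) := by
            gcongr
            exact Real.min_one_rpow_neg_mul_rpow_le_one hs (Nat.cast_nonneg _) hna.le
          _ = _ := by ring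
    _ = (cball + K) * 2 ^ b * ‖y‖ ^ (-b) := by
        rw [Real.div_rpow (norm_nonneg y) zero_le_two, Real.rpow_neg zero_le_two,
          div_inv_eq_mul]
        ring

end HaarMeasure

theorem stmt3_general (d : ℕ) (a b : ℝ) (ha : (d : ℝ) < a)
    (hb : 0 < b) (hbd : b < d) :
    ∃ C > 0, ∀ y : EuclideanSpace ℝ (Fin d), y ≠ 0 →
      (∫ x : EuclideanSpace ℝ (Fin d), (1 + ‖x - y‖ ^ a)⁻¹ * ‖x‖ ^ (-b))
        ≤ C * ‖y‖ ^ (-b) :=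
  exists_integral_inv_one_add_norm_sub_rpow_mul_norm_rpow_le hb (by simpa using hbd)
    (by simpa using ha)

theorem stmt3 (d : ℕ) (hd : 1 ≤ d) (a b : ℝ) (ha : (d : ℝ) < a)
    (hb : 0 < b) (hbd : b < d) :
    ∃ C > 0, ∀ y : EuclideanSpace ℝ (Fin d), y ≠ 0 →
      (∫ x : EuclideanSpace ℝ (Fin d), (1 + ‖x - y‖ ^ a)⁻¹ * ‖x‖ ^ (-b))
        ≤ C * ‖y‖ ^ (-b) :=
  stmt3_general d a b ha hb hbd
end

section
/- Let d ≥ 3, 0 ≤ γ < d, f(x) = ∫_0^1 (4πs)^{-d/2} exp(-|x|²/(4s)) ds, and f_γ(y) = ∫_{ℝ^d} f(y-x)|x|^{-γ} dx. Then sup_{|y| > 1} |y|^γ f_γ(y) < ∞. -/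
/-!
Split the convolution at `‖x‖ = ‖y‖ / 2`. Where `‖x‖ ≥ ‖y‖ / 2` the weight `‖x‖ ^ (-γ)` is at
most `(‖y‖ / 2) ^ (-γ)` and `f` has total mass `1`, which gives the `‖y‖ ^ (-γ)` term. Where
`‖x‖ < ‖y‖ / 2` we have `‖y - x‖ ≥ ‖y‖ / 2`, and away from the origin `f` has a Gaussian tail
`f z ≤ C exp (-‖z‖ ^ 2 / 8)` because only times `s ≤ 1` contribute. Since `γ < d`, the integral
of `‖x‖ ^ (-γ)` over that ball is finite and grows at most like `‖y‖ ^ d`, and the factor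
`exp (-‖y‖ ^ 2 / 32)` beats every power of `‖y‖`.
-/

open MeasureTheory

noncomputable def heatKernel (d : ℕ) (t : ℝ) (x : EuclideanSpace ℝ (Fin d)) : ℝ :=
  (4 * Real.pi * t) ^ (-(d : ℝ) / 2) * Real.exp (-‖x‖ ^ 2 / (4 * t))

noncomputable def fOcc (d : ℕ) (x : EuclideanSpace ℝ (Fin d)) : ℝ :=
  ∫ s in (0 : ℝ)..1, heatKernel d s x

noncomputable def fGamma (d : ℕ) (γ : ℝ) (y : EuclideanSpace ℝ (Fin d)) : ℝ :=
  ∫ x : EuclideanSpace ℝ (Fin d), fOcc d (y - x) * ‖x‖ ^ (-γ)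

open Real Set Metric Nat

lemma pow_le_factorial_mul_pow_mul_exp {b u : ℝ} (hb : 0 < b) (hu : 0 ≤ u) (n : ℕ) :
    u ^ n ≤ n ! * b ^ n * exp (u / b) := by
  have h := pow_div_factorial_le_exp (u / b) (div_nonneg hu hb.le) n
  rw [div_pow, div_div, div_le_iff₀ (by positivity)] at h
  linarith

section HeatKernel

variable (d : ℕ)

lemma heatKernel_nonneg {s : ℝ} (hs : 0 ≤ s) (x : EuclideanSpace ℝ (Fin d)) :
    0 ≤ heatKernel d s x := by
  unfold heatKernel
  positivity

lemma integral_heatKernel {s : ℝ} (hs : 0 < s) :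
    ∫ x : EuclideanSpace ℝ (Fin d), heatKernel d s x = 1 := by
  have hb : 0 < (4 * s)⁻¹ := by positivity
  simp_rw [heatKernel, neg_div, div_eq_inv_mul _ (4 * s), ← neg_mul]
  rw [integral_const_mul, GaussianFourier.integral_rexp_neg_mul_sq_norm hb,
    finrank_euclideanSpace_fin, div_inv_eq_mul, rpow_neg (by positivity), ← mul_assoc,
    mul_comm π 4, inv_mul_cancel₀ (by positivity)]

lemma integrable_heatKernel {s : ℝ} (hs : 0 < s) : Integrable (heatKernel d s) :=
  Integrable.of_integral_ne_zero (by rw [integral_heatKernel d hs]; exact one_ne_zero)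

lemma integrable_heatKernel_prod :
    Integrable (fun p : EuclideanSpace ℝ (Fin d) × ℝ => heatKernel d p.2 p.1)
      (volume.prod (volume.restrict (Ioc 0 1))) := by
  have hmeas : Measurable (fun p : EuclideanSpace ℝ (Fin d) × ℝ => heatKernel d p.2 p.1) := by
    unfold heatKernel
    fun_prop
  refine (integrable_prod_iff' hmeas.aestronglyMeasurable).2 ⟨?_, ?_⟩
  · filter_upwards [ae_restrict_mem measurableSet_Ioc] with s hs
    exact integrable_heatKernel d hs.1
  · refine (integrableOn_const (C := 1) (by simp) (by simp)).congr ?_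
    filter_upwards [ae_restrict_mem measurableSet_Ioc] with _ hs
    simp_rw [Real.norm_of_nonneg (heatKernel_nonneg d hs.1.le _), integral_heatKernel d hs.1]

lemma fOcc_eq_setIntegral :
    fOcc d = fun x => ∫ s in Ioc 0 1, heatKernel d s x :=
  funext fun _ => intervalIntegral.integral_of_le zero_le_one

lemma fOcc_nonneg (x : EuclideanSpace ℝ (Fin d)) : 0 ≤ fOcc d x :=
  intervalIntegral.integral_nonneg zero_le_one fun _ hs => heatKernel_nonneg d hs.1 x

lemma integrable_fOcc : Integrable (fOcc d) := by
  rw [fOcc_eq_setIntegral]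
  exact (integrable_heatKernel_prod d).integral_prod_left

lemma integral_fOcc : ∫ x, fOcc d x = 1 := by
  rw [fOcc_eq_setIntegral, integral_integral_swap (integrable_heatKernel_prod d),
    setIntegral_congr_fun measurableSet_Ioc fun s hs => integral_heatKernel d hs.1]
  simp

lemma heatKernel_le_of_half_le_norm {s : ℝ} (hs : s ∈ Ioc 0 1) {z : EuclideanSpace ℝ (Fin d)}
    (hz : 1 / 2 ≤ ‖z‖) : heatKernel d s z ≤ d ! * 32 ^ d * exp (-‖z‖ ^ 2 / 8) := by
  obtain ⟨hs0, hs1⟩ := hs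
  have hprefactor : (4 * π * s) ^ (-(d : ℝ) / 2) ≤ s⁻¹ ^ d :=
    calc (4 * π * s) ^ (-(d : ℝ) / 2) ≤ s ^ (-(d : ℝ) / 2) :=
          rpow_le_rpow_of_nonpos hs0 (by nlinarith [pi_gt_three])
            (by linarith [d.cast_nonneg (α := ℝ)])
      _ ≤ s ^ (-(d : ℝ)) :=
          rpow_le_rpow_of_exponent_ge hs0 hs1 (by linarith [d.cast_nonneg (α := ℝ)])
      _ = s⁻¹ ^ d := by rw [rpow_neg hs0.le, rpow_natCast, inv_pow]
  -- Half of the Gaussian factor gives the decay in `z`, the other half absorbs `s⁻¹ ^ d`.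
  have hsplit : exp (-‖z‖ ^ 2 / (4 * s)) ≤ exp (-‖z‖ ^ 2 / 8) * exp (-(s⁻¹ / 32)) := by
    rw [← exp_add, exp_le_exp]
    field_simp
    nlinarith
  have hpoly : s⁻¹ ^ d * exp (-(s⁻¹ / 32)) ≤ d ! * 32 ^ d := by
    rw [exp_neg, ← div_eq_mul_inv, div_le_iff₀ (exp_pos _)]
    exact pow_le_factorial_mul_pow_mul_exp (by norm_num) (inv_nonneg.2 hs0.le) d
  calc heatKernel d s z ≤ s⁻¹ ^ d * (exp (-‖z‖ ^ 2 / 8) * exp (-(s⁻¹ / 32))) :=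
        mul_le_mul hprefactor hsplit (exp_nonneg _) (by positivity)
    _ = s⁻¹ ^ d * exp (-(s⁻¹ / 32)) * exp (-‖z‖ ^ 2 / 8) := by ring
    _ ≤ d ! * 32 ^ d * exp (-‖z‖ ^ 2 / 8) := by gcongr

lemma fOcc_le_of_half_le_norm {z : EuclideanSpace ℝ (Fin d)} (hz : 1 / 2 ≤ ‖z‖) :
    fOcc d z ≤ d ! * 32 ^ d * exp (-‖z‖ ^ 2 / 8) := by
  rw [fOcc_eq_setIntegral]
  calc ∫ s in Ioc 0 1, heatKernel d s z
      ≤ ∫ _ in Ioc (0 : ℝ) 1, (d ! * 32 ^ d * exp (-‖z‖ ^ 2 / 8) : ℝ) :=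
        integral_mono_of_nonneg
          (ae_restrict_of_forall_mem measurableSet_Ioc fun _ hs => heatKernel_nonneg d hs.1.le z)
          (integrableOn_const (by simp) enorm_ne_top)
          (ae_restrict_of_forall_mem measurableSet_Ioc fun _ hs =>
            heatKernel_le_of_half_le_norm d hs hz)
    _ = d ! * 32 ^ d * exp (-‖z‖ ^ 2 / 8) := by simp

end HeatKernel

section RieszPotential

variable {E : Type*} [NormedAddCommGroup E] [NormedSpace ℝ E] [FiniteDimensional ℝ E]
  [MeasurableSpace E] [BorelSpace E] {μ : Measure E} [μ.IsAddHaarMeasure] {γ : ℝ}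

lemma integrableOn_ball_rpow_neg_norm (hE : 1 ≤ Module.finrank ℝ E)
    (hγ : γ < Module.finrank ℝ E) (r : ℝ) :
    IntegrableOn (fun x : E => ‖x‖ ^ (-γ)) (ball 0 r) μ :=
  integrableOn_ball_of_norm_le_rpow (C := 1) hE hγ
    (ae_of_all _ fun x => by rw [one_mul, norm_of_nonneg (by positivity)])
    (measurable_norm.pow_const _).aestronglyMeasurable

lemma setIntegral_ball_rpow_neg_norm_le (hE : 1 ≤ Module.finrank ℝ E) (hγ0 : 0 ≤ γ)
    (hγ : γ < Module.finrank ℝ E) (R : ℝ) :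
    ∫ x in ball 0 R, ‖x‖ ^ (-γ) ∂μ ≤ ∫ x in ball 0 1, ‖x‖ ^ (-γ) ∂μ + μ.real (ball 0 R) := by
  set g : E → ℝ := (ball 0 1).indicator fun x => ‖x‖ ^ (-γ)
  have hg : Integrable g μ :=
    (integrableOn_ball_rpow_neg_norm hE hγ 1).integrable_indicator measurableSet_ball
  have hg0 : 0 ≤ g := indicator_nonneg fun x _ => by positivity
  have hle : ∀ x, ‖x‖ ^ (-γ) ≤ g x + 1 := by
    intro x
    by_cases hx : x ∈ ball (0 : E) 1
    · simp [g, hx]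
    · have : 1 ≤ ‖x‖ := by simpa using hx
      simpa [g, hx] using rpow_le_one_of_one_le_of_nonpos this (neg_nonpos.2 hγ0)
  calc ∫ x in ball 0 R, ‖x‖ ^ (-γ) ∂μ ≤ ∫ x in ball 0 R, (g x + 1) ∂μ :=
        setIntegral_mono_on (integrableOn_ball_rpow_neg_norm hE hγ R)
          (hg.integrableOn.add (integrableOn_const measure_ball_lt_top.ne enorm_ne_top))
          measurableSet_ball fun x _ => hle x
    _ = ∫ x in ball 0 R, g x ∂μ + μ.real (ball 0 R) := by
        rw [integral_add hg.integrableOn (integrableOn_const measure_ball_lt_top.ne enorm_ne_top),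
          setIntegral_const, smul_eq_mul, mul_one]
    _ ≤ ∫ x in ball 0 1, ‖x‖ ^ (-γ) ∂μ + μ.real (ball 0 R) := by
        gcongr
        exact (setIntegral_le_integral hg (ae_of_all _ hg0)).trans_eq
          (integral_indicator measurableSet_ball)

lemma integral_mul_rpow_neg_norm_le {f : E → ℝ} (hf0 : 0 ≤ f) (hf : Integrable f μ)
    (hE : 1 ≤ Module.finrank ℝ E) (hγ0 : 0 ≤ γ) (hγ : γ < Module.finrank ℝ E) {y : E} {r A : ℝ}
    (hr : 0 < r) (hA : ∀ x ∈ ball (0 : E) r, f (y - x) ≤ A) :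
    ∫ x, f (y - x) * ‖x‖ ^ (-γ) ∂μ ≤
      r ^ (-γ) * ∫ x, f x ∂μ + A * ∫ x in ball 0 r, ‖x‖ ^ (-γ) ∂μ := by
  set g : E → ℝ := (ball 0 r).indicator fun x => ‖x‖ ^ (-γ)
  have hg : Integrable g μ :=
    (integrableOn_ball_rpow_neg_norm hE hγ r).integrable_indicator measurableSet_ball
  have hle : ∀ x, f (y - x) * ‖x‖ ^ (-γ) ≤ r ^ (-γ) * f (y - x) + A * g x := by
    intro x
    by_cases hx : x ∈ ball (0 : E) r
    · have hnear : f (y - x) * ‖x‖ ^ (-γ) ≤ A * ‖x‖ ^ (-γ) :=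
        mul_le_mul_of_nonneg_right (hA x hx) (by positivity)
      have : 0 ≤ r ^ (-γ) * f (y - x) := mul_nonneg (by positivity) (hf0 _)
      simp only [g, indicator_of_mem hx]
      linarith
    · have hfar : ‖x‖ ^ (-γ) ≤ r ^ (-γ) :=
        rpow_le_rpow_of_nonpos hr (by simpa using hx) (neg_nonpos.2 hγ0)
      simp only [g, indicator_of_notMem hx, mul_zero, add_zero]
      rw [mul_comm]
      exact mul_le_mul_of_nonneg_right hfar (hf0 _)
  calc ∫ x, f (y - x) * ‖x‖ ^ (-γ) ∂μ ≤ ∫ x, (r ^ (-γ) * f (y - x) + A * g x) ∂μ :=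
        integral_mono_of_nonneg (ae_of_all _ fun x => mul_nonneg (hf0 _) (by positivity))
          (((hf.comp_sub_left y).const_mul _).add (hg.const_mul _)) (ae_of_all _ hle)
    _ = r ^ (-γ) * ∫ x, f x ∂μ + A * ∫ x in ball 0 r, ‖x‖ ^ (-γ) ∂μ := by
        rw [integral_add ((hf.comp_sub_left y).const_mul _) (hg.const_mul _), integral_const_mul,
          integral_const_mul, integral_sub_left_eq_self, integral_indicator measurableSet_ball]

end RieszPotential

lemma exists_fGamma_le {d : ℕ} {γ : ℝ} (hγ : 0 ≤ γ) (hγd : γ < d) :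
    ∃ K : ℝ, 0 ≤ K ∧ ∀ y : EuclideanSpace ℝ (Fin d), 1 ≤ ‖y‖ →
      fGamma d γ y ≤ (‖y‖ / 2) ^ (-γ) + K * exp (-‖y‖ ^ 2 / 32) * ‖y‖ ^ d := by
  have hd : 1 ≤ d := by exact_mod_cast (hγ.trans_lt hγd : (0 : ℝ) < d)
  have hE : 1 ≤ Module.finrank ℝ (EuclideanSpace ℝ (Fin d)) := by
    rwa [finrank_euclideanSpace_fin]
  have hγE : γ < Module.finrank ℝ (EuclideanSpace ℝ (Fin d)) := by
    rwa [finrank_euclideanSpace_fin]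
  have : Nontrivial (EuclideanSpace ℝ (Fin d)) := Module.nontrivial_of_finrank_pos (R := ℝ) hE
  set I := ∫ x in ball (0 : EuclideanSpace ℝ (Fin d)) 1, ‖x‖ ^ (-γ)
  set B := volume.real (ball (0 : EuclideanSpace ℝ (Fin d)) 1)
  have hI : 0 ≤ I := setIntegral_nonneg measurableSet_ball fun x _ => by positivity
  have hB : 0 ≤ B := measureReal_nonneg
  refine ⟨d ! * 32 ^ d * (I + B), by positivity, fun y hy => ?_⟩
  have hnear : ∀ x ∈ ball (0 : EuclideanSpace ℝ (Fin d)) (‖y‖ / 2),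
      fOcc d (y - x) ≤ d ! * 32 ^ d * exp (-‖y‖ ^ 2 / 32) := by
    intro x hx
    have hyx : ‖y‖ / 2 ≤ ‖y - x‖ := by
      linarith [norm_sub_norm_le y x, mem_ball_zero_iff.1 hx]
    refine (fOcc_le_of_half_le_norm d (by linarith)).trans
      (mul_le_mul_of_nonneg_left (exp_le_exp.2 ?_) (by positivity))
    nlinarith
  have hball : ∫ x in ball (0 : EuclideanSpace ℝ (Fin d)) (‖y‖ / 2), ‖x‖ ^ (-γ) ≤
      (I + B) * ‖y‖ ^ d := by
    have hvol : volume.real (ball (0 : EuclideanSpace ℝ (Fin d)) (‖y‖ / 2)) ≤ ‖y‖ ^ d * B := by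
      rw [measureReal_def, Measure.addHaar_ball _ _ (by positivity), ENNReal.toReal_mul,
        ENNReal.toReal_ofReal (by positivity), finrank_euclideanSpace_fin, ← measureReal_def]
      gcongr
      linarith
    have hI_le : I ≤ I * ‖y‖ ^ d := le_mul_of_one_le_right hI (one_le_pow₀ hy)
    linarith [setIntegral_ball_rpow_neg_norm_le (μ := volume) hE hγ hγE (‖y‖ / 2)]
  calc fGamma d γ y ≤ (‖y‖ / 2) ^ (-γ) * (∫ x, fOcc d x) + d ! * 32 ^ d * exp (-‖y‖ ^ 2 / 32) *
        ∫ x in ball (0 : EuclideanSpace ℝ (Fin d)) (‖y‖ / 2), ‖x‖ ^ (-γ) :=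
        integral_mul_rpow_neg_norm_le (fOcc_nonneg d) (integrable_fOcc d) hE hγ hγE
          (by positivity) hnear
    _ ≤ (‖y‖ / 2) ^ (-γ) + d ! * 32 ^ d * exp (-‖y‖ ^ 2 / 32) * ((I + B) * ‖y‖ ^ d) := by
        rw [integral_fOcc, mul_one]
        gcongr
    _ = (‖y‖ / 2) ^ (-γ) + d ! * 32 ^ d * (I + B) * exp (-‖y‖ ^ 2 / 32) * ‖y‖ ^ d := by ring

theorem stmt10_general (d : ℕ) (γ : ℝ) (hγ : 0 ≤ γ) (hγd : γ < d) :
    ∃ C : ℝ, ∀ y : EuclideanSpace ℝ (Fin d), 1 < ‖y‖ →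
      ‖y‖ ^ γ * fGamma d γ y ≤ C := by
  obtain ⟨K, hK, hfGamma⟩ := exists_fGamma_le hγ hγd
  refine ⟨2 ^ γ + K * (d ! * 32 ^ d), fun y hy => ?_⟩
  have hscale : ‖y‖ ^ γ * (‖y‖ / 2) ^ (-γ) = 2 ^ γ := by
    rw [div_rpow (by positivity) zero_le_two, rpow_neg (by positivity), rpow_neg zero_le_two]
    field_simp
  have hpow : ‖y‖ ^ γ * ‖y‖ ^ d ≤ (‖y‖ ^ 2) ^ d := by
    rw [sq, mul_pow]
    gcongr
    exact (rpow_le_rpow_of_exponent_le hy.le hγd.le).trans_eq (rpow_natCast _ _)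
  have hgauss : (‖y‖ ^ 2) ^ d * exp (-‖y‖ ^ 2 / 32) ≤ d ! * 32 ^ d := by
    rw [neg_div, exp_neg, ← div_eq_mul_inv, div_le_iff₀ (exp_pos _)]
    exact pow_le_factorial_mul_pow_mul_exp (by norm_num) (by positivity) d
  calc ‖y‖ ^ γ * fGamma d γ y
      ≤ ‖y‖ ^ γ * ((‖y‖ / 2) ^ (-γ) + K * exp (-‖y‖ ^ 2 / 32) * ‖y‖ ^ d) := by
        gcongr
        exact hfGamma y hy.le
    _ = 2 ^ γ + K * (‖y‖ ^ γ * ‖y‖ ^ d * exp (-‖y‖ ^ 2 / 32)) := by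
        rw [mul_add, ← mul_assoc, hscale]
        ring
    _ ≤ 2 ^ γ + K * ((‖y‖ ^ 2) ^ d * exp (-‖y‖ ^ 2 / 32)) := by gcongr
    _ ≤ 2 ^ γ + K * (d ! * 32 ^ d) := by gcongr

theorem stmt10 (d : ℕ) (hd : 3 ≤ d) (γ : ℝ) (hγ : 0 ≤ γ) (hγd : γ < d) :
    ∃ C : ℝ, ∀ y : EuclideanSpace ℝ (Fin d), 1 < ‖y‖ →
      ‖y‖ ^ γ * fGamma d γ y ≤ C :=
  stmt10_general d γ hγ hγd
end
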